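/- Let G be a finite simple connected graph and C a cycle of length l in G. Let W⁺(G) be the graph obtained by adding a new vertex adjacent to every vertex of C. Then χ_dd(G) - l ≤ χ_dd(W⁺(G)). -/

import Mathlib

/-- A domination coloring of `G` with colors in `Fin n`: a proper coloring such that
every vertex dominates at least one (nonempty) color class, and every nonempty
color class is dominated by some vertex (contained in its closed neighborhood). -/
def IsDomColoring {V : Type*} (G : SimpleGraph V) {n : ℕ} (c : V → Fin n) : Prop :=
  (∀ u v : V, G.Adj u v → c u ≠ c v) ∧
  (∀ v : V, ∃ i : Fin n, (∃ u : V, c u = i) ∧ ∀ u : V, c u = i → u = v ∨ G.Adj v u) ∧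
  (∀ i : Fin n, (∃ u : V, c u = i) → ∃ v : V, ∀ u : V, c u = i → u = v ∨ G.Adj v u)

/-- The domination chromatic number: the least number of colors in a domination coloring. -/
noncomputable def ddChrom {V : Type*} (G : SimpleGraph V) : ℕ :=
  sInf {n : ℕ | ∃ c : V → Fin n, IsDomColoring G c}

/-- Add a new vertex (`none`) adjacent to every vertex of the set `S`. -/
def addVertex {V : Type*} (G : SimpleGraph V) (S : Set V) : SimpleGraph (Option V) where
  Adj x y :=
    match x, y with
    | some a, some b => G.Adj a b
    | some a, none => a ∈ S
    | none, some b => b ∈ S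
    | none, none => False
  symm := by
    refine ⟨?_⟩
    rintro (_ | a) (_ | b) h
    · exact h
    · exact h
    · exact h
    · exact h.symm
  loopless := by
    refine ⟨?_⟩
    rintro (_ | a) h
    · exact h
    · exact G.loopless.irrefl a h

lemma lemB {V : Type*} (G : SimpleGraph V) (S : Set V) {n : ℕ} (c : V → Fin n)
    (hc : IsDomColoring G c) :
    ∃ c' : Option V → Fin (n + 1), IsDomColoring (addVertex G S) c' := by
  classical
  refine ⟨fun x => match x with | none => Fin.last n | some a => (c a).castSucc, ?_, ?_, ?_⟩
  · rintro (_ | a) (_ | b) hadj heq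
    · exact hadj
    · exact absurd heq.symm (Fin.castSucc_lt_last (c b)).ne
    · exact absurd heq (Fin.castSucc_lt_last (c a)).ne
    · exact hc.1 a b hadj (Fin.castSucc_injective n heq)
  · rintro (_ | a)
    · refine ⟨Fin.last n, ⟨none, rfl⟩, ?_⟩
      rintro (_ | u) h
      · exact Or.inl rfl
      · exact absurd h (Fin.castSucc_lt_last (c u)).ne
    · obtain ⟨i, ⟨u, hu⟩, hdom⟩ := hc.2.1 a
      refine ⟨i.castSucc, ⟨some u, by simp [hu]⟩, ?_⟩
      rintro (_ | y) h
      · exact absurd h.symm (Fin.castSucc_lt_last i).ne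
      · rcases hdom y (Fin.castSucc_injective n h) with rfl | hAdj
        · exact Or.inl rfl
        · exact Or.inr hAdj
  · rintro i ⟨(_ | u0), hu0⟩
    · refine ⟨none, ?_⟩
      rintro (_ | u) h
      · exact Or.inl rfl
      · exact absurd (h.trans hu0.symm) (Fin.castSucc_lt_last (c u)).ne
    · have hi : i ≠ Fin.last n := fun h => (Fin.castSucc_lt_last (c u0)).ne (hu0.trans h)
      obtain ⟨j, rfl⟩ := Fin.exists_castSucc_eq.2 hi
      obtain ⟨d, hd⟩ := hc.2.2 j ⟨u0, Fin.castSucc_injective n hu0⟩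
      refine ⟨some d, ?_⟩
      rintro (_ | y) h
      · exact absurd h.symm (Fin.castSucc_lt_last j).ne
      · rcases hd y (Fin.castSucc_injective n h) with rfl | hAdj
        · exact Or.inl rfl
        · exact Or.inr hAdj

lemma lemA {V : Type*} (G : SimpleGraph V) {v : V}
    (w : G.Walk v v) (hw : w.IsCycle) {n : ℕ} (c : Option V → Fin n)
    (hc : IsDomColoring (addVertex G {x : V | x ∈ w.support}) c) :
    ∃ c' : V → Fin (n + w.length), IsDomColoring G c' := by
  classical
  set T := w.support.tail with hT
  have hTnd : T.Nodup := hw.2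
  have hTlen : T.length = w.length := by
    rw [hT, List.length_tail, w.length_support]
    omega
  have hvT : v ∈ T := by
    have hne : T ≠ [] := by
      intro h
      have := hw.three_le_length
      rw [← hTlen, h] at this
      simp at this
    obtain ⟨t, ts, hts⟩ := List.exists_cons_of_ne_nil hne
    have h1 : w.support.getLast? = some v := by
      rw [List.getLast?_eq_getLast_of_ne_nil (by simp), w.getLast_support]
    rw [w.support_eq_cons, ← hT, hts, List.getLast?_cons_cons] at h1
    obtain ⟨hne2, heq⟩ := List.mem_getLast?_eq_getLast h1
    rw [hts, heq]
    exact List.getLast_mem hne2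
  have hmem : ∀ x : V, x ∈ w.support ↔ x ∈ T := by
    intro x
    rw [w.support_eq_cons]
    simp only [List.mem_cons]
    constructor
    · rintro (rfl | h)
      · exact hvT
      · exact h
    · exact Or.inr
  have hidx : ∀ x ∈ T, List.idxOf x T < w.length := fun x hx => by
    rw [← hTlen]; exact List.idxOf_lt_length_iff.2 hx
  set c' : V → Fin (n + w.length) := fun x =>
    if h : x ∈ T then ⟨n + List.idxOf x T, by have := hidx x h; omega⟩
    else ⟨(c (some x)).1, by have := (c (some x)).2; omega⟩ with hc'
  -- basic value facts
  have hval_mem : ∀ x ∈ T, (c' x).1 = n + List.idxOf x T := fun x hx => by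
    simp [hc', hx]
  have hval_nmem : ∀ x, x ∉ T → (c' x).1 = (c (some x)).1 := fun x hx => by
    simp [hc', hx]
  refine ⟨c', ?_, ?_, ?_⟩
  · -- proper
    intro a b hadj heq
    have hne : a ≠ b := hadj.ne
    by_cases ha : a ∈ T <;> by_cases hb : b ∈ T
    · apply hne
      have := congrArg Fin.val heq
      rw [hval_mem a ha, hval_mem b hb] at this
      exact (List.idxOf_inj (y := b) ha).1 (by omega)
    · have := congrArg Fin.val heq
      rw [hval_mem a ha, hval_nmem b hb] at this
      have := (c (some b)).2; omega
    · have := congrArg Fin.val heq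
      rw [hval_nmem a ha, hval_mem b hb] at this
      have := (c (some a)).2; omega
    · have hAdj : (addVertex G {x : V | x ∈ w.support}).Adj (some a) (some b) := hadj
      apply hc.1 _ _ hAdj
      have := congrArg Fin.val heq
      rw [hval_nmem a ha, hval_nmem b hb] at this
      exact Fin.ext this
  · -- every vertex dominates
    intro x
    by_cases hx : x ∈ T
    · refine ⟨c' x, ⟨x, rfl⟩, ?_⟩
      intro u hu
      left
      by_cases hu' : u ∈ T
      · have := congrArg Fin.val hu
        rw [hval_mem u hu', hval_mem x hx] at this
        exact (List.idxOf_inj (y := x) hu').1 (by omega)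
      · have := congrArg Fin.val hu
        rw [hval_nmem u hu', hval_mem x hx] at this
        have := (c (some u)).2; omega
    · obtain ⟨i, ⟨u0, hu0⟩, hdom⟩ := hc.2.1 (some x)
      by_cases hy : ∃ y : V, y ∉ T ∧ c (some y) = i
      · obtain ⟨y, hyT, hyi⟩ := hy
        refine ⟨⟨i.1, by have := i.2; omega⟩, ⟨y, Fin.ext (by simp [hval_nmem y hyT, hyi])⟩, ?_⟩
        intro u hu
        have huT : u ∉ T := by
          intro huT
          have h1 := congrArg Fin.val hu
          rw [hval_mem u huT] at h1
          simp only [Fin.val_mk] at h1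
          have := i.2; omega
        have : c (some u) = i := by
          have := congrArg Fin.val hu
          rw [hval_nmem u huT] at this
          exact Fin.ext (by simpa using this)
        rcases hdom (some u) this with h | h
        · exact Or.inl (Option.some_injective _ h)
        · exact Or.inr h
      · push_neg at hy
        -- the witness u0 must be some y0 with y0 ∈ T
        have hy0 : ∃ y0 : V, y0 ∈ T ∧ c (some y0) = i := by
          match u0, hu0 with
          | none, hu0 =>
            rcases hdom none hu0 with h | h
            · exact absurd h (by simp)
            · exact absurd ((hmem x).1 h) hx
          | some y0, hu0 =>
            refine ⟨y0, ?_, hu0⟩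
            by_contra hy0T
            exact hy y0 hy0T hu0
        obtain ⟨y0, hy0T, hy0i⟩ := hy0
        have hAdj : G.Adj x y0 := by
          rcases hdom (some y0) hy0i with h | h
          · have hxy : y0 = x := Option.some_injective _ h
            exact absurd (hxy ▸ hy0T) hx
          · exact h
        refine ⟨c' y0, ⟨y0, rfl⟩, ?_⟩
        intro u hu
        have : u = y0 := by
          by_cases hu' : u ∈ T
          · have := congrArg Fin.val hu
            rw [hval_mem u hu', hval_mem y0 hy0T] at this
            exact (List.idxOf_inj (y := y0) hu').1 (by omega)
          · have := congrArg Fin.val hu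
            rw [hval_nmem u hu', hval_mem y0 hy0T] at this
            have := (c (some u)).2; omega
        exact Or.inr (this ▸ hAdj)
  · -- every class dominated
    rintro i ⟨u0, hu0⟩
    by_cases hi : i.1 < n
    · have hu0T : u0 ∉ T := by
        intro h
        have := congrArg Fin.val hu0
        rw [hval_mem u0 h] at this
        omega
      have hcu0 : c (some u0) = ⟨i.1, hi⟩ := by
        have := congrArg Fin.val hu0
        rw [hval_nmem u0 hu0T] at this
        exact Fin.ext this
      obtain ⟨d, hd⟩ := hc.2.2 ⟨i.1, hi⟩ ⟨some u0, hcu0⟩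
      match d with
      | none =>
        rcases hd (some u0) hcu0 with h | h
        · exact absurd h (by simp)
        · exact absurd ((hmem u0).1 h) hu0T
      | some y =>
        refine ⟨y, ?_⟩
        intro u hu
        have huT : u ∉ T := by
          intro h
          have := congrArg Fin.val hu
          rw [hval_mem u h] at this
          omega
        have : c (some u) = ⟨i.1, hi⟩ := by
          have := congrArg Fin.val hu
          rw [hval_nmem u huT] at this
          exact Fin.ext this
        rcases hd (some u) this with h | h
        · exact Or.inl (Option.some_injective _ h)
        · exact Or.inr h
    · have hu0T : u0 ∈ T := by
        by_contra h
        have := congrArg Fin.val hu0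
        rw [hval_nmem u0 h] at this
        have := (c (some u0)).2; omega
      refine ⟨u0, ?_⟩
      intro u hu
      left
      by_cases hu' : u ∈ T
      · have h1 := congrArg Fin.val hu
        have h2 := congrArg Fin.val hu0
        rw [hval_mem u hu'] at h1
        rw [hval_mem u0 hu0T] at h2
        exact (List.idxOf_inj (y := u0) hu').1 (by omega)
      · have := congrArg Fin.val hu
        rw [hval_nmem u hu'] at this
        have := (c (some u)).2; omega

/-- Cycle extending, lower bound: adding a new vertex joined to all vertices of a
cycle `C` of length `l` in a connected graph `G` gives `χ_dd(G) - l ≤ χ_dd(W⁺(G))`. -/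
theorem stmt11 {V : Type*} (G : SimpleGraph V) (hG : G.Connected) (v : V)
    (w : G.Walk v v) (hw : w.IsCycle) (l : ℕ) (hl : w.length = l) :
    ddChrom G - l ≤ ddChrom (addVertex G {x : V | x ∈ w.support}) := by
  classical
  subst hl
  set S₂ := {n : ℕ | ∃ c : Option V → Fin n, IsDomColoring (addVertex G {x : V | x ∈ w.support}) c} with hS₂
  by_cases h : S₂.Nonempty
  · obtain ⟨c, hc⟩ := Nat.sInf_mem h
    obtain ⟨c', hc'⟩ := lemA G w hw c hc
    have h1 : ddChrom G ≤ sInf S₂ + w.length := by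
      apply Nat.sInf_le
      exact ⟨c', hc'⟩
    have : ddChrom (addVertex G {x : V | x ∈ w.support}) = sInf S₂ := rfl
    omega
  · have hempty : {n : ℕ | ∃ c : V → Fin n, IsDomColoring G c} = ∅ := by
      ext n
      simp only [Set.mem_setOf_eq, Set.mem_empty_iff_false, iff_false]
      rintro ⟨c, hc⟩
      exact h ⟨n + 1, lemB G _ c hc⟩
    unfold ddChrom
    rw [hempty]
    simp
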